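/- arXiv:1108.2132 — 8 statements merged into one kernel-verified Lean document; each statement's English description precedes it below -/
import Mathlib

section
/- For a positive integer n and real numbers 0 ≤ s ≤ t, the integral ∫_0^s ((s-u)^{n-1}/(n-1)!) * ((t-u)^{n-1}/(n-1)!) du equals ∑_{k=0}^{n-1} (-1)^{n-1-k} * (s^{2n-1-k}/(2n-1-k)!) * (t^k/k!). -/
/-!
Write `D m x = x ^ m / m!`, so that `u ↦ D (m + 1) (c - u)` has derivative `-D m (c - u)`.
Integrating by parts moves one derivative from the `t`-factor to the `s`-factor:
`∫₀ˢ D a (s-u) D (b+1) (t-u) du = D (a+1) s D (b+1) t - ∫₀ˢ D (a+1) (s-u) D b (t-u) du`,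
and iterating this down to `b = 0`, where `∫₀ˢ D a (s-u) du = D (a+1) s`, produces the
alternating sum.
-/

open Finset Nat intervalIntegral

noncomputable def dividedPow (m : ℕ) (x : ℝ) : ℝ := x ^ m / m !

@[simp]
lemma dividedPow_zero_left (x : ℝ) : dividedPow 0 x = 1 := by
  simp [dividedPow]

@[simp]
lemma dividedPow_succ_zero (m : ℕ) : dividedPow (m + 1) 0 = 0 := by
  simp [dividedPow]

@[fun_prop]
lemma continuous_dividedPow (m : ℕ) : Continuous (dividedPow m) :=
  (continuous_pow m).div_const _

lemma hasDerivAt_dividedPow_succ_sub (m : ℕ) (c u : ℝ) :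
    HasDerivAt (fun u => dividedPow (m + 1) (c - u)) (-dividedPow m (c - u)) u := by
  have h := (((hasDerivAt_id u).const_sub c).fun_pow (m + 1)).div_const ((m + 1)! : ℝ)
  refine h.congr_deriv ?_
  simp only [dividedPow, Nat.factorial_succ, Nat.cast_mul, Nat.cast_succ, id, Nat.add_sub_cancel]
  field_simp

lemma integral_dividedPow_sub (a : ℕ) (s : ℝ) :
    ∫ u in (0 : ℝ)..s, dividedPow a (s - u) = dividedPow (a + 1) s := by
  have h := integral_eq_sub_of_hasDerivAt
    (fun u _ => (hasDerivAt_dividedPow_succ_sub a s u).neg)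
    ((by fun_prop : Continuous fun u => - -dividedPow a (s - u)).intervalIntegrable 0 s)
  simpa using h

lemma integral_dividedPow_mul_dividedPow_succ (a b : ℕ) (s t : ℝ) :
    ∫ u in (0 : ℝ)..s, dividedPow a (s - u) * dividedPow (b + 1) (t - u) =
      dividedPow (a + 1) s * dividedPow (b + 1) t -
        ∫ u in (0 : ℝ)..s, dividedPow (a + 1) (s - u) * dividedPow b (t - u) := by
  have h := integral_mul_deriv_eq_deriv_mul (u := fun u => dividedPow (b + 1) (t - u))
    (v := fun u => -dividedPow (a + 1) (s - u))
    (fun u _ => hasDerivAt_dividedPow_succ_sub b t u)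
    (fun u _ => (hasDerivAt_dividedPow_succ_sub a s u).neg)
    ((by fun_prop : Continuous fun u => -dividedPow b (t - u)).intervalIntegrable 0 s)
    ((by fun_prop : Continuous fun u => - -dividedPow a (s - u)).intervalIntegrable 0 s)
  simp only [neg_neg, sub_self, sub_zero, dividedPow_succ_zero, neg_zero, mul_zero, zero_add,
    mul_neg, neg_mul, sub_neg_eq_add] at h
  simpa only [mul_comm] using h

theorem integral_dividedPow_mul_dividedPow (a b : ℕ) (s t : ℝ) :
    ∫ u in (0 : ℝ)..s, dividedPow a (s - u) * dividedPow b (t - u) =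
      ∑ p ∈ antidiagonal b, (-1) ^ p.2 * dividedPow (a + 1 + p.2) s * dividedPow p.1 t := by
  induction b generalizing a with
  | zero => simpa using integral_dividedPow_sub a s
  | succ b ih =>
    rw [integral_dividedPow_mul_dividedPow_succ, ih, Nat.sum_antidiagonal_succ', sub_eq_add_neg,
      ← sum_neg_distrib]
    congr 1
    · simp
    · refine sum_congr rfl fun p _ => ?_
      rw [show a + 1 + (p.2 + 1) = a + 1 + 1 + p.2 by ring]
      ring

theorem stmt2_general (n : ℕ) (hn : 0 < n) (s t : ℝ) :
    ∫ u in (0:ℝ)..s, ((s-u)^(n-1) / (Nat.factorial (n-1))) * ((t-u)^(n-1) / (Nat.factorial (n-1))) =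
      ∑ k ∈ Finset.range n,
        (-1 : ℝ)^(n-1-k) * (s^(2*n-1-k) / (Nat.factorial (2*n-1-k))) * (t^k / (Nat.factorial k)) := by
  obtain ⟨m, rfl⟩ : ∃ m, n = m + 1 := ⟨n - 1, by omega⟩
  rw [Nat.add_sub_cancel]
  change ∫ u in (0 : ℝ)..s, dividedPow m (s - u) * dividedPow m (t - u) = _
  rw [integral_dividedPow_mul_dividedPow, Nat.sum_antidiagonal_eq_sum_range_succ
    (fun j i => (-1 : ℝ) ^ i * dividedPow (m + 1 + i) s * dividedPow j t)]
  refine sum_congr rfl fun k hk => ?_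
  have hkm : k ≤ m := Nat.lt_succ_iff.mp (mem_range.mp hk)
  rw [show 2 * (m + 1) - 1 - k = m + 1 + (m - k) by omega]
  rfl

theorem stmt2 (n : ℕ) (hn : 0 < n) (s t : ℝ) (hs : 0 ≤ s) (hst : s ≤ t) :
    ∫ u in (0:ℝ)..s, ((s-u)^(n-1) / (Nat.factorial (n-1))) * ((t-u)^(n-1) / (Nat.factorial (n-1))) =
      ∑ k ∈ Finset.range n,
        (-1 : ℝ)^(n-1-k) * (s^(2*n-1-k) / (Nat.factorial (2*n-1-k))) * (t^k / (Nat.factorial k)) :=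
  stmt2_general n hn s t
end

section
/- Let J be a nonempty finite set of positive integers. The symmetric matrix (1/(j+k-1))_{j,k ∈ J} is positive definite, hence invertible. -/
/-!
The matrix `(1 / (j + k - 1))` is the Gram matrix of the monomials `t ^ (j - 1)` in `L²[0, 1]`:
its quadratic form at `x` is `∫₀¹ p(t)² dt` with `p = ∑ x_j t^(j-1)`. The exponents are distinct,
so `p ≠ 0` whenever `x ≠ 0`, and a nonzero polynomial has finitely many roots, so the integral
is positive.
-/

open Polynomial Matrix MeasureTheory

lemma integral_sq_eval_pos {p : ℝ[X]} (hp : p ≠ 0) : 0 < ∫ t in (0 : ℝ)..1, p.eval t ^ 2 := by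
  have hint : IntervalIntegrable (fun t => p.eval t ^ 2) volume 0 1 :=
    (p.continuous.pow 2).intervalIntegrable 0 1
  rw [intervalIntegral.integral_pos_iff_support_of_nonneg_ae
    (Filter.Eventually.of_forall fun t => sq_nonneg _) hint]
  refine ⟨one_pos, ?_⟩
  have hroots : volume {t : ℝ | p.IsRoot t} = 0 :=
    (Polynomial.finite_setOfPred_isRoot hp).measure_zero _
  have hsub : Set.Ioc (0 : ℝ) 1 \ {t | p.IsRoot t}
      ⊆ Function.support (fun t => p.eval t ^ 2) ∩ Set.Ioc 0 1 := by
    rintro t ⟨ht, hroot⟩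
    exact ⟨pow_ne_zero 2 hroot, ht⟩
  calc (0 : ENNReal) < volume (Set.Ioc (0 : ℝ) 1 \ {t | p.IsRoot t}) := by
        rw [measure_sdiff_null hroots]
        simp
    _ ≤ _ := measure_mono hsub

lemma integral_pow_mul_pow (a b : ℕ) :
    ∫ t in (0 : ℝ)..1, t ^ a * t ^ b = 1 / (((a + b : ℕ) : ℝ) + 1) := by
  simp [← pow_add, integral_pow]

section MonomialGram

variable {ι : Type*}

noncomputable def monomialGramMatrix (e : ι → ℕ) : Matrix ι ι ℝ :=
  Matrix.of fun i j => 1 / (((e i + e j : ℕ) : ℝ) + 1)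

lemma monomialGramMatrix_isHermitian (e : ι → ℕ) : (monomialGramMatrix e).IsHermitian := by
  ext i j
  simp [monomialGramMatrix, add_comm]

lemma dotProduct_monomialGramMatrix_mulVec [Fintype ι] (e : ι → ℕ) (x : ι → ℝ) :
    x ⬝ᵥ monomialGramMatrix e *ᵥ x
      = ∫ t in (0 : ℝ)..1, (∑ i, x i * t ^ e i) ^ 2 := by
  have hint : ∀ i j, IntervalIntegrable (fun t : ℝ => x i * x j * (t ^ e i * t ^ e j)) volume 0 1 :=
    fun i j => Continuous.intervalIntegrable (by fun_prop) 0 1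
  calc x ⬝ᵥ monomialGramMatrix e *ᵥ x
      = ∑ i, ∑ j, ∫ t in (0 : ℝ)..1, x i * x j * (t ^ e i * t ^ e j) := by
        simp only [dotProduct, mulVec, monomialGramMatrix, of_apply, Finset.mul_sum,
          intervalIntegral.integral_const_mul, integral_pow_mul_pow]
        exact Finset.sum_congr rfl fun i _ => Finset.sum_congr rfl fun j _ => by ring
    _ = ∫ t in (0 : ℝ)..1, ∑ i, ∑ j, x i * x j * (t ^ e i * t ^ e j) := by
        rw [intervalIntegral.integral_finsetSum fun i _ =>
          Continuous.intervalIntegrable (by fun_prop) 0 1]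
        simp_rw [intervalIntegral.integral_finsetSum fun j _ => hint _ j]
    _ = ∫ t in (0 : ℝ)..1, (∑ i, x i * t ^ e i) ^ 2 := by
        simp_rw [sq, Finset.sum_mul_sum]
        exact intervalIntegral.integral_congr fun t _ => Finset.sum_congr rfl fun i _ =>
          Finset.sum_congr rfl fun j _ => by ring

lemma coeff_sum_C_mul_X_pow [Fintype ι] {e : ι → ℕ} (he : Function.Injective e) (x : ι → ℝ)
    (i : ι) :
    (∑ j, C (x j) * X ^ e j).coeff (e i) = x i := by
  classical
  simp [Polynomial.finsetSum_coeff, Polynomial.coeff_C_mul, Polynomial.coeff_X_pow, he.eq_iff]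

theorem monomialGramMatrix_posDef [Fintype ι] {e : ι → ℕ} (he : Function.Injective e) :
    (monomialGramMatrix e).PosDef := by
  refine PosDef.of_dotProduct_mulVec_pos (monomialGramMatrix_isHermitian e) fun x hx => ?_
  set p : ℝ[X] := ∑ j, C (x j) * X ^ e j
  have hp : p ≠ 0 := by
    obtain ⟨i, hi⟩ := Function.ne_iff.mp hx
    intro h
    have hcoeff : p.coeff (e i) = x i := coeff_sum_C_mul_X_pow he x i
    rw [h, coeff_zero] at hcoeff
    exact hi hcoeff.symm
  have heval : ∀ t, p.eval t = ∑ i, x i * t ^ e i := fun t => by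
    simp [p, Polynomial.eval_finsetSum]
  simpa [dotProduct_monomialGramMatrix_mulVec, heval] using integral_sq_eval_pos hp

end MonomialGram

theorem stmt3_general (J : Finset ℕ) (hpos : ∀ j ∈ J, 0 < j) :
    (Matrix.of fun j k : J => (1 : ℝ) / ((j : ℕ) + (k : ℕ) - 1 : ℝ)).PosDef ∧
      IsUnit (Matrix.of fun j k : J => (1 : ℝ) / ((j : ℕ) + (k : ℕ) - 1 : ℝ)).det := by
  have hinj : Function.Injective fun j : J => (j : ℕ) - 1 := fun j k hjk =>
    Subtype.ext (by have := hpos j j.2; have := hpos k k.2; simp only at hjk; omega)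
  have hM : (Matrix.of fun j k : J => (1 : ℝ) / ((j : ℕ) + (k : ℕ) - 1 : ℝ))
      = monomialGramMatrix fun j : J => (j : ℕ) - 1 := by
    ext j k
    have := hpos j j.2; have := hpos k k.2
    simp only [monomialGramMatrix, of_apply]
    rw [Nat.cast_add, Nat.cast_sub (by omega), Nat.cast_sub (by omega)]
    ring_nf
  rw [hM]
  have hpd := monomialGramMatrix_posDef hinj
  classical
  exact ⟨hpd, (Matrix.isUnit_iff_isUnit_det _).mp hpd.isUnit⟩

theorem stmt3 (J : Finset ℕ) (hJ : J.Nonempty) (hpos : ∀ j ∈ J, 0 < j) :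
    (Matrix.of fun j k : J => (1 : ℝ) / ((j : ℕ) + (k : ℕ) - 1 : ℝ)).PosDef ∧
      IsUnit (Matrix.of fun j k : J => (1 : ℝ) / ((j : ℕ) + (k : ℕ) - 1 : ℝ)).det :=
  stmt3_general J hpos
end

section
/- Let n be a positive integer, I a subset of {0,1,...,2n-1} of cardinality n, and a_0,...,a_{n-1} and (b_i)_{i∈I} real numbers. Then there exists a unique polynomial P of degree less than 2n such that P^{(i)}(0) = a_i for all i ∈ {0,...,n-1} and P^{(i)}(1) = b_i for all i ∈ I. -/
open Polynomial

lemma leib (R : Polynomial ℝ) (i : ℕ) :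
    derivative^[i] ((X - C 1) * R) =
      (X - C 1) * derivative^[i] R + C (i : ℝ) * derivative^[i - 1] R := by
  induction i with
  | zero => simp
  | succ i ih =>
    rw [Function.iterate_succ_apply', ih]
    cases i with
    | zero => simp [derivative_mul]; ring
    | succ k =>
      have e1 : derivative^[k+1] R = derivative (derivative^[k] R) :=
        Function.iterate_succ_apply' derivative k R
      have e2 : derivative^[k+2] R = derivative (derivative^[k+1] R) :=
        Function.iterate_succ_apply' derivative (k+1) R
      simp only [Nat.succ_sub_one] at *
      simp only [derivative_add, derivative_mul, derivative_sub, derivative_X, derivative_C,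
        e1, e2]
      push_cast
      simp only [C_add, C_1]
      ring

lemma xpow_dvd_derivative {P : Polynomial ℝ} {p : ℕ} (hp : 1 ≤ p) (h : (X : ℝ[X]) ^ p ∣ P) :
    (X : ℝ[X]) ^ (p - 1) ∣ derivative P := by
  obtain ⟨Q, rfl⟩ := h
  have hx : (X : ℝ[X]) ^ p = X ^ (p-1) * X := by
    rw [← pow_succ]
    congr 1
    omega
  rw [derivative_mul, derivative_X_pow, hx]
  refine Dvd.dvd.add ⟨C (p:ℝ) * Q, by ring⟩ ⟨X * derivative Q, by ring⟩

lemma key (N : ℕ) : ∀ (p : ℕ) (I : Finset ℕ) (P : Polynomial ℝ), p + I.card ≤ N →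
    (∀ m ≤ p + I.card, m ≤ p + (I.filter (· < m)).card) →
    P.natDegree < p + I.card → (X : ℝ[X]) ^ p ∣ P →
    (∀ i ∈ I, (derivative^[i] P).eval 1 = 0) → P = 0 := by
  induction N with
  | zero =>
    intro p I P hN _ hdeg _ _
    omega
  | succ N ih =>
    intro p I P hN hpolya hdeg hdvd hcond
    by_cases hP : P = 0
    · exact hP
    rcases I.eq_empty_or_nonempty with hIe | hIne
    · exfalso
      have h1 : ((X : ℝ[X]) ^ p).natDegree ≤ P.natDegree := natDegree_le_of_dvd hdvd hP
      rw [natDegree_X_pow] at h1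
      rw [hIe] at hdeg
      simp at hdeg
      omega
    have hq : 1 ≤ I.card := Finset.card_pos.mpr hIne
    by_cases h0 : 0 ∈ I
    · -- case 0 ∈ I : factor out (X - 1)
      have hroot : P.eval 1 = 0 := by simpa using hcond 0 h0
      obtain ⟨R, hR⟩ : (X - C 1) ∣ P := dvd_iff_isRoot.mpr hroot
      have hRne : R ≠ 0 := by
        intro h; apply hP; rw [hR, h, mul_zero]
      set f : ℕ → ℕ := fun i => i - 1 with hf
      set I'' : Finset ℕ := (I.erase 0).image f with hI''
      have hinj : ∀ s : Finset ℕ, (0 : ℕ) ∉ s → Set.InjOn f s := by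
        intro s hs x hx y hy hxy
        have hx0 : x ≠ 0 := by rintro rfl; exact hs hx
        have hy0 : y ≠ 0 := by rintro rfl; exact hs hy
        simp only [hf] at hxy
        omega
      have hcard : I''.card = I.card - 1 := by
        rw [hI'', Finset.card_image_of_injOn (hinj _ (Finset.notMem_erase 0 I)),
          Finset.card_erase_of_mem h0]
      have hfilter : ∀ m, (I''.filter (· < m)).card = (I.filter (· < m + 1)).card - 1 := by
        intro m
        have hset : I''.filter (· < m) = ((I.filter (· < m + 1)).erase 0).image f := by
          ext j
          simp only [hI'', Finset.mem_filter, Finset.mem_image, Finset.mem_erase]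
          constructor
          · rintro ⟨⟨i, ⟨hi0, hiI⟩, rfl⟩, hjm⟩
            have hfi : f i = i - 1 := rfl
            exact ⟨i, ⟨hi0, hiI, by omega⟩, rfl⟩
          · rintro ⟨i, ⟨hi0, hiI, him⟩, rfl⟩
            have hfi : f i = i - 1 := rfl
            exact ⟨⟨i, ⟨hi0, hiI⟩, rfl⟩, by omega⟩
        have h0f : 0 ∈ I.filter (· < m + 1) := Finset.mem_filter.mpr ⟨h0, by omega⟩
        rw [hset, Finset.card_image_of_injOn
          (hinj _ (Finset.notMem_erase 0 _)), Finset.card_erase_of_mem h0f]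
      have hcop : IsCoprime ((X : ℝ[X]) ^ p) (X - C 1) := by
        refine IsCoprime.pow_left ⟨1, -1, ?_⟩
        ring_nf
        simp
      have hdvdR : (X : ℝ[X]) ^ p ∣ R := by
        refine hcop.dvd_of_dvd_mul_left ?_
        rw [← hR]; exact hdvd
      have hRzero : R = 0 := by
        refine ih p I'' R ?_ ?_ ?_ hdvdR ?_
        · omega
        · intro m hm
          have h1 := hpolya (m + 1) (by omega)
          have h2 := hfilter m
          have h3 : 0 ∈ I.filter (· < m + 1) := Finset.mem_filter.mpr ⟨h0, by omega⟩
          have h4 : 1 ≤ (I.filter (· < m + 1)).card := Finset.card_pos.mpr ⟨0, h3⟩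
          omega
        · have hXC : (X - C 1 : ℝ[X]) ≠ 0 := X_sub_C_ne_zero 1
          have := natDegree_mul hXC hRne
          rw [← hR, natDegree_X_sub_C] at this
          have hq : 1 ≤ I.card := Finset.card_pos.mpr hIne
          omega
        · intro j hj
          rw [hI'', Finset.mem_image] at hj
          obtain ⟨i, hi, rfl⟩ := hj
          have hi0 : i ≠ 0 := Finset.ne_of_mem_erase hi
          have hiI : i ∈ I := Finset.mem_of_mem_erase hi
          have := hcond i hiI
          rw [hR, leib] at this
          simp only [eval_add, eval_mul, eval_sub, eval_X, eval_C, sub_self, zero_mul,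
            zero_add] at this
          have hi0' : (i : ℝ) ≠ 0 := Nat.cast_ne_zero.mpr hi0
          exact (mul_eq_zero.mp this).resolve_left hi0'
      exact absurd (by rw [hR, hRzero, mul_zero]) hP
    · -- case 0 ∉ I : take derivative
      have hp1 : 1 ≤ p := by
        have h1 := hpolya 1 (by have := Finset.card_pos.mpr hIne; omega)
        have h2 : I.filter (· < 1) = ∅ := by
          ext i
          simp only [Finset.mem_filter, Finset.notMem_empty, iff_false]
          rintro ⟨hiI, hi⟩
          interval_cases i
          exact h0 hiI
        rw [h2] at h1
        simp at h1
        omega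
      set f : ℕ → ℕ := fun i => i - 1 with hf
      set I' : Finset ℕ := I.image f with hI'
      have hinj : Set.InjOn f I := by
        intro x hx y hy hxy
        have hx0 : x ≠ 0 := by rintro rfl; exact h0 hx
        have hy0 : y ≠ 0 := by rintro rfl; exact h0 hy
        simp only [hf] at hxy
        omega
      have hcard : I'.card = I.card := Finset.card_image_of_injOn hinj
      have hDzero : derivative P = 0 := by
        refine ih (p - 1) I' (derivative P) ?_ ?_ ?_ (xpow_dvd_derivative hp1 hdvd) ?_
        · omega
        · intro m hm
          have h1 := hpolya (m + 1) (by omega)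
          have hset : I'.filter (· < m) = (I.filter (· < m + 1)).image f := by
            ext j
            simp only [hI', Finset.mem_filter, Finset.mem_image]
            constructor
            · rintro ⟨⟨i, hiI, rfl⟩, hjm⟩
              have hi0 : i ≠ 0 := by rintro rfl; exact h0 hiI
              have hfi : f i = i - 1 := rfl
              exact ⟨i, ⟨hiI, by omega⟩, rfl⟩
            · rintro ⟨i, ⟨hiI, him⟩, rfl⟩
              have hi0 : i ≠ 0 := by rintro rfl; exact h0 hiI
              have hfi : f i = i - 1 := rfl
              exact ⟨⟨i, hiI, rfl⟩, by omega⟩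
          have hc2 : ((I.filter (· < m + 1)).image f).card = (I.filter (· < m + 1)).card :=
            Finset.card_image_of_injOn (hinj.mono (by intro x hx; exact Finset.mem_of_mem_filter x hx))
          rw [hset, hc2]
          omega
        · have := natDegree_derivative_le P
          have hq : 1 ≤ I.card := Finset.card_pos.mpr hIne
          omega
        · intro j hj
          rw [hI', Finset.mem_image] at hj
          obtain ⟨i, hiI, rfl⟩ := hj
          have hi0 : i ≠ 0 := by rintro rfl; exact h0 hiI
          have : derivative^[i - 1] (derivative P) = derivative^[i] P := by
            rw [← Function.iterate_succ_apply]
            congr 1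
            omega
          rw [this]
          exact hcond i hiI
      have hnd : P.natDegree = 0 := natDegree_eq_zero_of_derivative_eq_zero hDzero
      have hPC : P = C (P.coeff 0) := (eq_C_of_natDegree_eq_zero hnd)
      have hXdvd : (X : ℝ[X]) ∣ P := dvd_trans (dvd_pow_self X (by omega)) hdvd
      have hev : P.eval 0 = 0 := by
        have : IsRoot P 0 := by
          rw [← dvd_iff_isRoot]
          simpa using hXdvd
        exact this
      rw [hPC] at hev ⊢
      simp at hev
      rw [hev]
      simp

lemma xpow_dvd_of_deriv (P : Polynomial ℝ) (n : ℕ)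
    (h : ∀ k < n, (derivative^[k] P).eval 0 = 0) : (X : ℝ[X]) ^ n ∣ P := by
  rw [X_pow_dvd_iff]
  intro d hd
  have hh := h d hd
  rw [← coeff_zero_eq_eval_zero, coeff_iterate_derivative] at hh
  simp only [zero_add, Nat.descFactorial_self, nsmul_eq_mul] at hh
  have : ((d.factorial : ℝ)) ≠ 0 := Nat.cast_ne_zero.mpr d.factorial_ne_zero
  exact (mul_eq_zero.mp hh).resolve_left this

theorem stmt5 (n : ℕ) (hn : 0 < n) (I : Finset ℕ) (hI : I ⊆ Finset.range (2*n))
    (hcard : I.card = n) (a b : ℕ → ℝ) :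
    ∃! P : Polynomial ℝ, P.degree < 2*n ∧
      (∀ i < n, (Polynomial.derivative^[i] P).eval 0 = a i) ∧
      (∀ i ∈ I, (Polynomial.derivative^[i] P).eval 1 = b i) := by
  classical
  have hcast : ((2*n : ℕ) : WithBot ℕ) = 2 * (n : WithBot ℕ) := by push_cast; ring
  have hpolya : ∀ m ≤ n + I.card, m ≤ n + (I.filter (· < m)).card := by
    intro m hm
    have hsplit := Finset.card_filter_add_card_filter_not (s := I) (p := (· < m))
    have hsub : I.filter (fun i => ¬ i < m) ⊆ Finset.Ico m (2*n) := by
      intro i hi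
      simp only [Finset.mem_filter] at hi
      have h2 := hI hi.1
      rw [Finset.mem_range] at h2
      rw [Finset.mem_Ico]
      omega
    have hcl := Finset.card_le_card hsub
    rw [Nat.card_Ico] at hcl
    omega
  have huniq : ∀ P : Polynomial ℝ, P.degree < 2*(n : WithBot ℕ) →
      (∀ i < n, (derivative^[i] P).eval 0 = 0) →
      (∀ i ∈ I, (derivative^[i] P).eval 1 = 0) → P = 0 := by
    intro P hd h0 h1
    by_cases hP : P = 0
    · exact hP
    refine key (2*n) n I P (by omega) hpolya ?_ ?_ h1
    · rw [hcard]
      have : P.natDegree < 2*n := by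
        rw [natDegree_lt_iff_degree_lt hP, hcast]
        exact hd
      omega
    · exact xpow_dvd_of_deriv P n h0
  set Dl : Polynomial ℝ →ₗ[ℝ] Polynomial ℝ := derivative with hDl
  set L : Polynomial ℝ →ₗ[ℝ] (Fin n → ℝ) × ({ x // x ∈ I } → ℝ) :=
    LinearMap.prod
      (LinearMap.pi fun k : Fin n => (Polynomial.leval 0).comp (Dl ^ (k : ℕ)))
      (LinearMap.pi fun i : { x // x ∈ I } => (Polynomial.leval 1).comp (Dl ^ (i : ℕ)))
    with hL
  set L0 := L.comp (Polynomial.degreeLT ℝ (2*n)).subtype with hL0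
  have happ : ∀ (P : Polynomial ℝ) (k : ℕ) (x : ℝ),
      ((Polynomial.leval x).comp (Dl ^ k)) P = (derivative^[k] P).eval x := by
    intro P k x
    simp [Module.End.pow_apply, Polynomial.leval, hDl]
  have hL0app1 : ∀ (x : Polynomial.degreeLT ℝ (2*n)) (k : Fin n),
      (L0 x).1 k = (derivative^[(k:ℕ)] (x : Polynomial ℝ)).eval 0 := by
    intro x k
    simp only [hL0, hL, LinearMap.comp_apply, Submodule.subtype_apply, LinearMap.prod_apply,
      Pi.prod, LinearMap.pi_apply]
    exact happ _ _ _
  have hL0app2 : ∀ (x : Polynomial.degreeLT ℝ (2*n)) (i : { x // x ∈ I }),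
      (L0 x).2 i = (derivative^[(i:ℕ)] (x : Polynomial ℝ)).eval 1 := by
    intro x i
    simp only [hL0, hL, LinearMap.comp_apply, Submodule.subtype_apply, LinearMap.prod_apply,
      Pi.prod, LinearMap.pi_apply]
    exact happ _ _ _
  have hinj : Function.Injective L0 := by
    rw [injective_iff_map_eq_zero]
    intro x hx
    have hP : (x : Polynomial ℝ) = 0 := by
      refine huniq _ ?_ ?_ ?_
      · have := Polynomial.mem_degreeLT.mp x.2
        rwa [hcast] at this
      · intro i hi
        have := hL0app1 x ⟨i, hi⟩
        rw [hx] at this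
        simpa using this.symm
      · intro i hi
        have := hL0app2 x ⟨i, hi⟩
        rw [hx] at this
        simpa using this.symm
    exact Subtype.ext hP
  haveI : FiniteDimensional ℝ (Polynomial.degreeLT ℝ (2*n)) :=
    LinearEquiv.finiteDimensional (Polynomial.degreeLTEquiv ℝ (2*n)).symm
  have hfr : Module.finrank ℝ (Polynomial.degreeLT ℝ (2*n)) = 2*n := by
    rw [(Polynomial.degreeLTEquiv ℝ (2*n)).finrank_eq]
    simp
  have hfr2 : Module.finrank ℝ ((Fin n → ℝ) × ({ x // x ∈ I } → ℝ)) = 2*n := by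
    rw [Module.finrank_prod]
    simp [Fintype.card_coe, hcard]
    ring
  have hsurj := (LinearMap.injective_iff_surjective_of_finrank_eq_finrank
    (by rw [hfr, hfr2])).mp hinj
  obtain ⟨x, hxval⟩ := hsurj (fun k => a (k : ℕ), fun i => b (i : ℕ))
  refine ⟨(x : Polynomial ℝ), ⟨?_, ?_, ?_⟩, ?_⟩
  · have := Polynomial.mem_degreeLT.mp x.2
    rwa [hcast] at this
  · intro i hi
    have h1 := congrFun (congrArg Prod.fst hxval) ⟨i, hi⟩
    rw [hL0app1] at h1
    exact h1
  · intro i hi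
    have h1 := congrFun (congrArg Prod.snd hxval) ⟨i, hi⟩
    rw [hL0app2] at h1
    exact h1
  · rintro Q ⟨hQd, hQ0, hQ1⟩
    have hx2 := Polynomial.mem_degreeLT.mp x.2
    rw [hcast] at hx2
    have hdiff : Q - (x : Polynomial ℝ) = 0 := by
      refine huniq _ ?_ ?_ ?_
      · exact lt_of_le_of_lt (Polynomial.degree_sub_le _ _) (max_lt hQd hx2)
      · intro i hi
        rw [Polynomial.iterate_derivative_sub, Polynomial.eval_sub]
        have h1 := congrFun (congrArg Prod.fst hxval) ⟨i, hi⟩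
        rw [hL0app1] at h1
        rw [hQ0 i hi, h1]
        ring
      · intro i hi
        rw [Polynomial.iterate_derivative_sub, Polynomial.eval_sub]
        have h1 := congrFun (congrArg Prod.snd hxval) ⟨i, hi⟩
        rw [hL0app2] at h1
        rw [hQ1 i hi, h1]
        ring
    linear_combination (norm := abel) hdiff
end

section
/- Let n be a positive integer, I a subset of {0,...,2n-1} with cardinality n, and suppose a real polynomial P of degree less than 2n satisfies P^{(i)}(0) = 0 for all i ∈ {0,...,n-1} and P^{(i)}(1) = 0 for all i ∈ I. Then P = 0. -/
/-!
Count real roots below `b` with multiplicity. By Rolle's theorem, passing from `p` to `p'` loses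
at most one such root, and none when `p b = 0`: then Rolle on `(-∞, b]` applies, and the root
at `b` loses exactly one order. Iterating down to the constant `p^(deg p)`, the roots of `p`
below `b` plus the indices `i ≤ deg p` with `p^(i)(b) = 0` number at most `deg p`. For the
theorem, take `b = 1`: the root of order `n` at `0` and the at least `n - (2n - 1 - deg P)`
indices of `I` up to `deg P` give `2n - (2n - 1 - deg P) ≤ deg P`, which is absurd.
-/

open Polynomial Finset

namespace Polynomial

section Rolle

variable {s : Set ℝ} [s.OrdConnected] [DecidablePred (· ∈ s)]

theorem card_roots_toFinset_filter_le_card_roots_derivative_sdiff_succ (p : ℝ[X]) :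
    (p.roots.filter (· ∈ s)).toFinset.card ≤
      (((derivative p).roots.filter (· ∈ s)).toFinset \
        (p.roots.filter (· ∈ s)).toFinset).card + 1 := by
  rcases eq_or_ne (derivative p) 0 with hp' | hp'
  · rw [eq_C_of_derivative_eq_zero hp']
    simp
  have hp : p ≠ 0 := ne_of_apply_ne derivative (by rwa [derivative_zero])
  refine Finset.card_le_sdiff_of_interleaved fun x hx y hy hxy _ => ?_
  simp only [Multiset.mem_toFinset, Multiset.mem_filter, mem_roots hp] at hx hy
  obtain ⟨z, hz, hz'⟩ := exists_deriv_eq_zero hxy p.continuousOn (hx.1.trans hy.1.symm)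
  refine ⟨z, ?_, hz⟩
  rw [Multiset.mem_toFinset, Multiset.mem_filter, mem_roots hp', IsRoot, ← p.deriv]
  exact ⟨hz', Set.OrdConnected.out ‹_› hx.2 hy.2 (Set.Ioo_subset_Icc_self hz)⟩

theorem card_roots_filter_le_derivative (p : ℝ[X]) :
    Multiset.card (p.roots.filter (· ∈ s)) ≤
      Multiset.card ((derivative p).roots.filter (· ∈ s)) + 1 := by
  set R := p.roots.filter (· ∈ s)
  set R' := (derivative p).roots.filter (· ∈ s)
  have hcount : ∀ x ∈ R.toFinset, R.count x ≤ R'.count x + 1 := by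
    intro x hx
    have hxs : x ∈ s := (Multiset.mem_filter.1 (Multiset.mem_toFinset.1 hx)).2
    rw [Multiset.count_filter_of_pos hxs, Multiset.count_filter_of_pos hxs, count_roots,
      count_roots]
    have := rootMultiplicity_sub_one_le_derivative_rootMultiplicity p x
    omega
  have hnew : ∀ x ∈ R'.toFinset \ R.toFinset, 1 ≤ R'.count x := fun x hx =>
    Multiset.count_pos.2 (Multiset.mem_toFinset.1 (Finset.mem_sdiff.1 hx).1)
  calc Multiset.card R
      = ∑ x ∈ R.toFinset, R.count x := (Multiset.toFinset_sum_count_eq R).symm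
    _ ≤ ∑ x ∈ R.toFinset, (R'.count x + 1) := Finset.sum_le_sum hcount
    _ = ∑ x ∈ R.toFinset, R'.count x + R.toFinset.card := by
      rw [Finset.sum_add_distrib, Finset.card_eq_sum_ones]
    _ ≤ ∑ x ∈ R.toFinset, R'.count x + ((R'.toFinset \ R.toFinset).card + 1) := by
      grw [card_roots_toFinset_filter_le_card_roots_derivative_sdiff_succ p]
    _ ≤ ∑ x ∈ R.toFinset, R'.count x +
          (∑ x ∈ R'.toFinset \ R.toFinset, R'.count x + 1) := by
      grw [Finset.card_eq_sum_ones, Finset.sum_le_sum hnew]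
    _ = ∑ x ∈ R.toFinset ∪ R'.toFinset, R'.count x + 1 := by
      rw [← add_assoc, ← Finset.sum_union Finset.disjoint_sdiff,
        Finset.union_sdiff_self_eq_union]
    _ = Multiset.card R' + 1 := by
      rw [Multiset.sum_count_eq_card fun x hx => Finset.mem_union_right _
        (Multiset.mem_toFinset.2 hx)]

end Rolle

theorem card_roots_filter_le_eq_add_rootMultiplicity {R : Type*} [CommRing R] [IsDomain R]
    [LinearOrder R] (p : R[X]) (b : R) :
    Multiset.card (p.roots.filter (· ≤ b)) =
      Multiset.card (p.roots.filter (· < b)) + p.rootMultiplicity b := by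
  rw [← Multiset.filter_add_not (· < b) (p.roots.filter (· ≤ b)), Multiset.card_add,
    Multiset.filter_filter, Multiset.filter_filter, ← count_roots,
    Multiset.count_eq_card_filter_eq]
  congr 2 <;> refine Multiset.filter_congr fun x _ => ?_
  · exact ⟨fun h => h.1, fun h => ⟨h, h.le⟩⟩
  · exact ⟨fun h => (not_lt.1 h.1).antisymm h.2,
      fun h => ⟨h ▸ lt_irrefl b, h ▸ le_rfl⟩⟩

theorem card_roots_filter_lt_add_ite_le_derivative (p : ℝ[X]) (b : ℝ) :
    Multiset.card (p.roots.filter (· < b)) + (if p.eval b = 0 then 1 else 0) ≤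
      Multiset.card ((derivative p).roots.filter (· < b)) + 1 := by
  split_ifs with hb
  · rcases eq_or_ne p 0 with rfl | hp
    · simp
    have hrolle := card_roots_filter_le_derivative (s := Set.Iic b) p
    have hmult := (rootMultiplicity_pos hp).2 hb
    simp only [Set.mem_Iic] at hrolle
    rw [card_roots_filter_le_eq_add_rootMultiplicity, card_roots_filter_le_eq_add_rootMultiplicity,
      derivative_rootMultiplicity_of_root hb] at hrolle
    omega
  · exact card_roots_filter_le_derivative (s := Set.Iio b) p

theorem card_roots_filter_lt_add_card_filter_range_le_iterate_derivative (p : ℝ[X]) (b : ℝ)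
    (k : ℕ) :
    Multiset.card (p.roots.filter (· < b)) + #{i ∈ range k | (derivative^[i] p).eval b = 0} ≤
      Multiset.card ((derivative^[k] p).roots.filter (· < b)) + k := by
  induction k generalizing p with
  | zero => simp
  | succ k ih =>
    have hsplit : #{i ∈ range (k + 1) | (derivative^[i] p).eval b = 0} =
        #{i ∈ range k | (derivative^[i] (derivative p)).eval b = 0} +
          if p.eval b = 0 then 1 else 0 := by
      simp only [Finset.card_filter, Finset.sum_range_succ', Function.iterate_succ_apply,
        Function.iterate_zero_apply]
      rfl
    rw [hsplit, Function.iterate_succ_apply]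
    have := ih (derivative p)
    have := card_roots_filter_lt_add_ite_le_derivative p b
    omega

theorem iterate_derivative_natDegree {R : Type*} [Semiring R] (p : R[X]) :
    derivative^[p.natDegree] p = C (p.natDegree.factorial • p.leadingCoeff) := by
  have hconst := Nat.le_zero.1 ((natDegree_iterate_derivative p p.natDegree).trans_eq
    (Nat.sub_self _))
  rw [eq_C_of_natDegree_eq_zero hconst, coeff_iterate_derivative, zero_add,
    Nat.descFactorial_self, leadingCoeff]

theorem card_roots_filter_lt_add_card_filter_range_natDegree_le {p : ℝ[X]} (hp : p ≠ 0)
    (b : ℝ) :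
    Multiset.card (p.roots.filter (· < b)) +
      #{i ∈ range (p.natDegree + 1) | (derivative^[i] p).eval b = 0} ≤ p.natDegree := by
  have htop : (derivative^[p.natDegree] p).eval b ≠ 0 := by
    rw [iterate_derivative_natDegree, eval_C, nsmul_eq_mul]
    exact mul_ne_zero (Nat.cast_ne_zero.2 (Nat.factorial_ne_zero _)) (leadingCoeff_ne_zero.2 hp)
  have := card_roots_filter_lt_add_card_filter_range_le_iterate_derivative p b p.natDegree
  rw [iterate_derivative_natDegree, roots_C, Multiset.filter_zero, Multiset.card_zero,
    zero_add] at this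
  rwa [Finset.range_add_one, Finset.filter_insert, if_neg htop]

theorem le_rootMultiplicity_of_isRoot_iterate_derivative {R : Type*} [CommRing R] [IsDomain R]
    [CharZero R] {p : R[X]} (hp : p ≠ 0) {t : R} {n : ℕ}
    (hroot : ∀ m < n, (derivative^[m] p).IsRoot t) : n ≤ p.rootMultiplicity t := by
  rcases Nat.eq_zero_or_pos n with rfl | hn
  · exact Nat.zero_le _
  have := lt_rootMultiplicity_of_isRoot_iterate_derivative (n := n - 1) hp
    fun m hm => hroot m (by omega)
  omega

end Polynomial

theorem stmt6_general (n : ℕ) (I : Finset ℕ) (hI : I ⊆ Finset.range (2*n))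
    (hcard : I.card = n) (P : Polynomial ℝ) (hdeg : P.degree < 2*n)
    (h0 : ∀ i < n, (Polynomial.derivative^[i] P).eval 0 = 0)
    (h1 : ∀ i ∈ I, (Polynomial.derivative^[i] P).eval 1 = 0) :
    P = 0 := by
  by_contra hP
  have hd : P.natDegree < 2 * n := (natDegree_lt_iff_degree_lt hP).2 (mod_cast hdeg)
  have hroots : n ≤ Multiset.card (P.roots.filter (· < 1)) :=
    calc n ≤ P.rootMultiplicity 0 := le_rootMultiplicity_of_isRoot_iterate_derivative hP h0
      _ = (P.roots.filter (· < 1)).count 0 := by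
        rw [Multiset.count_filter_of_pos (p := (· < (1 : ℝ))) zero_lt_one, count_roots]
      _ ≤ _ := Multiset.count_le_card _ _
  have hsplit : I ⊆ {i ∈ range (P.natDegree + 1) | (derivative^[i] P).eval 1 = 0} ∪
      Ioo P.natDegree (2 * n) := by
    intro i hi
    have hi2n := mem_range.1 (hI hi)
    rcases le_or_gt i P.natDegree with hid | hid
    · exact mem_union_left _ (mem_filter.2 ⟨mem_range.2 (Nat.lt_succ_of_le hid), h1 i hi⟩)
    · exact mem_union_right _ (mem_Ioo.2 ⟨hid, hi2n⟩)
  have hcount := (card_le_card hsplit).trans (card_union_le _ _)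
  have hbound := card_roots_filter_lt_add_card_filter_range_natDegree_le hP 1
  rw [Nat.card_Ioo] at hcount
  omega

theorem stmt6 (n : ℕ) (hn : 0 < n) (I : Finset ℕ) (hI : I ⊆ Finset.range (2*n))
    (hcard : I.card = n) (P : Polynomial ℝ) (hdeg : P.degree < 2*n)
    (h0 : ∀ i < n, (Polynomial.derivative^[i] P).eval 0 = 0)
    (h1 : ∀ i ∈ I, (Polynomial.derivative^[i] P).eval 1 = 0) :
    P = 0 :=
  stmt6_general n I hI hcard P hdeg h0 h1
end

section
/- Let n be a positive integer and I ⊆ {0,...,2n-1} with |I| = n satisfying (2n-1) − I = {0,...,2n-1} \ I (where (2n-1) − I = {2n-1-i : i ∈ I}). If w : [0,1] → ℝ is 2n times continuously differentiable with w^{(2n)} = 0 on [0,1], w^{(i)}(0) = 0 for i ∈ {0,...,n-1}, and w^{(i)}(1) = 0 for i ∈ I, then w = 0 on [0,1]. -/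
/-!
Write `D k` for the `k`-th derivative of `w` on `[0, 1]`. The Lagrange identity for the operator
`(-1)^n d^{2n}/dt^{2n}` says that the bilinear concomitant
`B = ∑_{k<n} (-1)^k D (2n-1-k) * D k` has derivative `D (2n) * D 0 - (-1)^n (D n)^2`, that is
`-(-1)^n (D n)^2` here. Each term of `B` vanishes at `0` (as `D k 0 = 0` for `k < n`) and at `1`
(by the symmetry of `I`, either `k ∈ I` or `2n-1-k ∈ I`). Hence `∫₀¹ (D n)^2 = 0`, so `D n = 0`,
and integrating down from `D n` with the initial conditions at `0` gives `w = 0`.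
-/

open Set Finset

def concomitant (u : ℕ → ℝ → ℝ) (n : ℕ) (t : ℝ) : ℝ :=
  ∑ k ∈ range n, (-1) ^ k * (u (2 * n - 1 - k) t * u k t)

theorem hasDerivAt_concomitant {u : ℕ → ℝ → ℝ} {n : ℕ} {x : ℝ}
    (hu : ∀ k < 2 * n, HasDerivAt (u k) (u (k + 1) x) x) :
    HasDerivAt (concomitant u n) (u (2 * n) x * u 0 x - (-1) ^ n * u n x ^ 2) x := by
  have hterm : ∀ k ∈ range n, HasDerivAt (fun t => (-1 : ℝ) ^ k * (u (2 * n - 1 - k) t * u k t))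
      ((-1) ^ k * (u (2 * n - k) x * u k x) -
        (-1) ^ (k + 1) * (u (2 * n - (k + 1)) x * u (k + 1) x)) x := by
    intro k hk
    have hk : k < n := mem_range.mp hk
    have hleft : HasDerivAt (u (2 * n - 1 - k)) (u (2 * n - k) x) x := by
      simpa [show 2 * n - 1 - k + 1 = 2 * n - k by omega] using hu (2 * n - 1 - k) (by omega)
    refine ((hleft.mul (hu k (by omega))).const_mul ((-1 : ℝ) ^ k)).congr_deriv ?_
    rw [show 2 * n - (k + 1) = 2 * n - 1 - k by omega, pow_succ]
    ring
  refine (HasDerivAt.fun_sum hterm).congr_deriv ?_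
  rw [sum_range_sub' (fun k => (-1 : ℝ) ^ k * (u (2 * n - k) x * u k x)), Nat.sub_zero,
    show 2 * n - n = n by omega]
  ring

theorem concomitant_eq_zero {u : ℕ → ℝ → ℝ} {n : ℕ} {t : ℝ}
    (h : ∀ k < n, u k t = 0 ∨ u (2 * n - 1 - k) t = 0) : concomitant u n t = 0 := by
  refine sum_eq_zero fun k hk => ?_
  rcases h k (mem_range.mp hk) with h | h <;> simp [h]

theorem continuousOn_concomitant {u : ℕ → ℝ → ℝ} {n : ℕ} {s : Set ℝ}
    (hu : ∀ k < 2 * n, ContinuousOn (u k) s) : ContinuousOn (concomitant u n) s := by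
  refine continuousOn_finsetSum _ fun k hk => ?_
  have hk : k < n := mem_range.mp hk
  exact continuousOn_const.mul ((hu _ (by omega)).mul (hu _ (by omega)))

theorem Finset.mem_or_sub_mem_of_image_sub_eq_sdiff {I : Finset ℕ} {m : ℕ} (hI : I ⊆ range m)
    (hsym : I.image (fun i => m - 1 - i) = range m \ I) {k : ℕ} (hk : k < m) :
    k ∈ I ∨ m - 1 - k ∈ I := by
  by_cases hkI : k ∈ I
  · exact Or.inl hkI
  · have hk' : k ∈ I.image (fun i => m - 1 - i) := by
      rw [hsym]; exact mem_sdiff.mpr ⟨mem_range.mpr hk, hkI⟩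
    obtain ⟨i, hi, rfl⟩ := mem_image.mp hk'
    have := mem_range.mp (hI hi)
    exact Or.inr (by rwa [show m - 1 - (m - 1 - i) = i by omega])

theorem eqOn_zero_of_hasDerivAt_eq_mul_sq {a b c : ℝ} {g B : ℝ → ℝ} (hab : a < b) (hc : c ≠ 0)
    (hg : ContinuousOn g (Icc a b)) (hB : ContinuousOn B (Icc a b))
    (hB' : ∀ x ∈ Ioo a b, HasDerivAt B (c * g x ^ 2) x) (hBab : B a = B b) :
    ∀ x ∈ Icc a b, g x = 0 := by
  have hg2 : ContinuousOn (fun x => g x ^ 2) (Icc a b) := hg.pow 2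
  have hint : c * ∫ x in a..b, g x ^ 2 = 0 := by
    rw [← intervalIntegral.integral_const_mul,
      intervalIntegral.integral_eq_sub_of_hasDerivAt_of_le hab.le hB hB'
        ((continuousOn_const.mul hg2).intervalIntegrable_of_Icc hab.le), hBab, sub_self]
  by_contra! hne
  obtain ⟨t, ht, hgt⟩ := hne
  have hpos : ∫ x in a..b, (0 : ℝ) < ∫ x in a..b, g x ^ 2 :=
    intervalIntegral.integral_lt_integral_of_continuousOn_of_le_of_exists_lt hab
      continuousOn_const hg2 (fun x _ => sq_nonneg (g x)) ⟨t, ht, by positivity⟩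
  rw [intervalIntegral.integral_zero] at hpos
  exact hc (by simpa [hpos.ne'] using hint)

theorem hasDerivWithinAt_iteratedDerivWithin {f : ℝ → ℝ} {s : Set ℝ} {m k : ℕ} {x : ℝ}
    (hf : ContDiffOn ℝ m f s) (hs : UniqueDiffOn ℝ s) (hk : k < m) (hx : x ∈ s) :
    HasDerivWithinAt (iteratedDerivWithin k f s) (iteratedDerivWithin (k + 1) f s x) s x := by
  rw [iteratedDerivWithin_succ]
  exact ((hf.differentiableOn_iteratedDerivWithin (by exact_mod_cast hk) hs) x hx).hasDerivWithinAt

theorem eqOn_zero_of_iteratedDerivWithin_Icc {a b : ℝ} {f : ℝ → ℝ} {n : ℕ} (hab : a < b)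
    (hf : ContDiffOn ℝ n f (Icc a b)) (ha : ∀ k < n, iteratedDerivWithin k f (Icc a b) a = 0)
    (hn : ∀ x ∈ Icc a b, iteratedDerivWithin n f (Icc a b) x = 0) :
    ∀ x ∈ Icc a b, f x = 0 := by
  suffices h : ∀ k ≤ n, ∀ x ∈ Icc a b, iteratedDerivWithin k f (Icc a b) x = 0 by
    simpa using h 0 (Nat.zero_le n)
  intro k hk
  induction hk using Nat.decreasingInduction with
  | self => exact hn
  | of_succ k hk ih =>
    intro x hx
    rw [constant_of_derivWithin_zero
      (hf.differentiableOn_iteratedDerivWithin (by exact_mod_cast hk) (uniqueDiffOn_Icc hab))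
      (fun y hy => by rw [← iteratedDerivWithin_succ, ih y (Ico_subset_Icc_self hy)]) x hx]
    exact ha k hk

theorem stmt7_general (n : ℕ) (I : Finset ℕ) (hI : I ⊆ Finset.range (2*n))
    (hsym : Finset.image (fun i => 2*n - 1 - i) I = Finset.range (2*n) \ I)
    (w : ℝ → ℝ) (hw : ContDiffOn ℝ (2*n) w (Set.Icc 0 1))
    (h2n : ∀ t ∈ Set.Icc (0:ℝ) 1, iteratedDerivWithin (2*n) w (Set.Icc 0 1) t = 0)
    (h0 : ∀ i < n, iteratedDerivWithin i w (Set.Icc 0 1) 0 = 0)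
    (h1 : ∀ i ∈ I, iteratedDerivWithin i w (Set.Icc 0 1) 1 = 0) :
    ∀ t ∈ Set.Icc (0:ℝ) 1, w t = 0 := by
  set D : ℕ → ℝ → ℝ := fun k => iteratedDerivWithin k w (Icc 0 1) with hD
  have hs : UniqueDiffOn ℝ (Icc (0 : ℝ) 1) := uniqueDiffOn_Icc zero_lt_one
  have hcont : ∀ k ≤ 2 * n, ContinuousOn (D k) (Icc 0 1) := fun k hk =>
    hw.continuousOn_iteratedDerivWithin (by exact_mod_cast hk) hs
  have hB' : ∀ x ∈ Ioo (0 : ℝ) 1, HasDerivAt (concomitant D n) (-(-1) ^ n * D n x ^ 2) x := by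
    intro x hx
    have hder := hasDerivAt_concomitant (u := D) (n := n) fun k hk =>
      (hasDerivWithinAt_iteratedDerivWithin hw hs hk (Ioo_subset_Icc_self hx)).hasDerivAt
        (Icc_mem_nhds hx.1 hx.2)
    simpa [hD, h2n x (Ioo_subset_Icc_self hx)] using hder
  have hB0 : concomitant D n 0 = 0 := concomitant_eq_zero fun k hk => Or.inl (h0 k hk)
  have hB1 : concomitant D n 1 = 0 := concomitant_eq_zero fun k hk =>
    (I.mem_or_sub_mem_of_image_sub_eq_sdiff hI hsym (by omega : k < 2 * n)).imp (h1 k) (h1 _)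
  have hDn : ∀ x ∈ Icc (0 : ℝ) 1, D n x = 0 :=
    eqOn_zero_of_hasDerivAt_eq_mul_sq zero_lt_one (by simp) (hcont n (by omega))
      (continuousOn_concomitant fun k hk => hcont k hk.le) hB' (hB0.trans hB1.symm)
  exact eqOn_zero_of_iteratedDerivWithin_Icc zero_lt_one (hw.of_le (by norm_cast; omega)) h0 hDn

theorem stmt7 (n : ℕ) (hn : 0 < n) (I : Finset ℕ) (hI : I ⊆ Finset.range (2*n))
    (hcard : I.card = n)
    (hsym : Finset.image (fun i => 2*n - 1 - i) I = Finset.range (2*n) \ I)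
    (w : ℝ → ℝ) (hw : ContDiffOn ℝ (2*n) w (Set.Icc 0 1))
    (h2n : ∀ t ∈ Set.Icc (0:ℝ) 1, iteratedDerivWithin (2*n) w (Set.Icc 0 1) t = 0)
    (h0 : ∀ i < n, iteratedDerivWithin i w (Set.Icc 0 1) 0 = 0)
    (h1 : ∀ i ∈ I, iteratedDerivWithin i w (Set.Icc 0 1) 1 = 0) :
    ∀ t ∈ Set.Icc (0:ℝ) 1, w t = 0 :=
  stmt7_general n I hI hsym w hw h2n h0 h1
end

section
/- Let n, k be positive integers with k ≤ n, and define f(t) = ∫_0^t ((t-u)^{n-1}/(n-1)!) * ((1-u)^{k-1}/(k-1)!) du. Then for any integer i with n ≤ i ≤ 2n-1, the i-th derivative of f at t = 1 equals (-1)^{k-1} if i = k+n-1 and 0 otherwise. -/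
/-!
By Cauchy's formula for repeated integration (one integration by parts per step), `f` is the
`n`-fold primitive, based at `0`, of `g u = (1 - u) ^ (k - 1) / (k - 1)!`. Hence `f⁽ⁱ⁾ = g⁽ⁱ⁻ⁿ⁾`
for `i ≥ n`, and the only derivative of `g` not vanishing at `1` is the `(k - 1)`-st, which is
`(-1) ^ (k - 1)` there.
-/

open intervalIntegral

noncomputable def intervalPrimitive (a : ℝ) (g : ℝ → ℝ) : ℝ → ℝ := fun t => ∫ u in a..t, g u

section

variable {a : ℝ} {g : ℝ → ℝ}

theorem hasDerivAt_intervalPrimitive (hg : Continuous g) (t : ℝ) :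
    HasDerivAt (intervalPrimitive a g) (g t) t :=
  (hg.integral_hasStrictDerivAt a t).hasDerivAt

theorem continuous_intervalPrimitive (hg : Continuous g) : Continuous (intervalPrimitive a g) :=
  continuous_iff_continuousAt.2 fun t => (hasDerivAt_intervalPrimitive hg t).continuousAt

theorem continuous_iterate_intervalPrimitive (hg : Continuous g) (m : ℕ) :
    Continuous ((intervalPrimitive a)^[m] g) := by
  induction m with
  | zero => exact hg
  | succ m ih => rw [Function.iterate_succ_apply']; exact continuous_intervalPrimitive ih

theorem iterate_deriv_iterate_intervalPrimitive (hg : Continuous g) (m : ℕ) :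
    deriv^[m] ((intervalPrimitive a)^[m] g) = g := by
  induction m with
  | zero => rfl
  | succ m ih =>
    conv_rhs => rw [← ih]
    rw [Function.iterate_succ_apply, Function.iterate_succ_apply']
    congr 1
    exact funext fun t =>
      (hasDerivAt_intervalPrimitive (continuous_iterate_intervalPrimitive hg m) t).deriv

theorem hasDerivAt_neg_sub_pow_div_factorial (t x : ℝ) (m : ℕ) :
    HasDerivAt (fun y => -((t - y) ^ (m + 1) / (m + 1).factorial))
      ((t - x) ^ m / m.factorial) x := by
  refine ((((hasDerivAt_id' x).const_sub t).pow (m + 1)).div_const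
    ((m + 1).factorial : ℝ)).neg.congr_deriv ?_
  push_cast [Nat.factorial_succ]
  field_simp

theorem integral_sub_pow_mul_intervalPrimitive (hg : Continuous g) (t : ℝ) (m : ℕ) :
    ∫ u in a..t, (t - u) ^ m / m.factorial * intervalPrimitive a g u
      = ∫ u in a..t, (t - u) ^ (m + 1) / (m + 1).factorial * g u := by
  have parts := integral_mul_deriv_eq_deriv_mul
    (fun x _ => hasDerivAt_intervalPrimitive (a := a) hg x)
    (fun x _ => hasDerivAt_neg_sub_pow_div_factorial t x m)
    (hg.intervalIntegrable a t)
    ((by fun_prop : Continuous fun x : ℝ => (t - x) ^ m / m.factorial).intervalIntegrable a t)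
  simp only [intervalPrimitive, integral_same, sub_self, zero_pow (Nat.succ_ne_zero m), zero_div,
    neg_zero, mul_zero, zero_mul, zero_sub, mul_neg, integral_neg, neg_neg] at parts
  simpa only [intervalPrimitive, mul_comm] using parts

theorem integral_sub_pow_div_factorial_mul_eq_iterate_intervalPrimitive (hg : Continuous g)
    (m : ℕ) (t : ℝ) :
    ∫ u in a..t, (t - u) ^ m / m.factorial * g u = (intervalPrimitive a)^[m + 1] g t := by
  induction m generalizing g with
  | zero => simp [intervalPrimitive]
  | succ m ih =>
    rw [Function.iterate_succ_apply, ← ih (continuous_intervalPrimitive hg),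
      integral_sub_pow_mul_intervalPrimitive hg]

end

theorem iteratedDeriv_one_sub_pow_one (p s : ℕ) :
    iteratedDeriv s (fun u : ℝ => (1 - u) ^ p) 1 =
      if s = p then (-1 : ℝ) ^ p * p.factorial else 0 := by
  simp only [iteratedDeriv_comp_const_sub (f := fun u : ℝ => u ^ p), sub_self,
    iteratedDeriv_fun_pow_zero, smul_eq_mul]
  split_ifs with h <;> simp [h]

theorem stmt11_general (n k : ℕ) (hk : 1 ≤ k) (hkn : k ≤ n) (f : ℝ → ℝ)
    (hf : ∀ t : ℝ, f t = ∫ u in (0:ℝ)..t,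
      ((t-u)^(n-1) / (Nat.factorial (n-1))) * ((1-u)^(k-1) / (Nat.factorial (k-1))))
    (i : ℕ) (hi1 : n ≤ i) :
    iteratedDeriv i f 1 = if i = k + n - 1 then (-1 : ℝ)^(k-1) else 0 := by
  set g : ℝ → ℝ := fun u => (1 - u) ^ (k - 1) / (k - 1).factorial
  have hg : Continuous g := by fun_prop
  have hf_primitive : f = (intervalPrimitive 0)^[n] g := by
    funext t
    rw [hf, integral_sub_pow_div_factorial_mul_eq_iterate_intervalPrimitive hg,
      Nat.sub_add_cancel (by omega)]
  have hderiv : iteratedDeriv i f = iteratedDeriv (i - n) g := by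
    rw [iteratedDeriv_eq_iterate, iteratedDeriv_eq_iterate, ← Nat.sub_add_cancel hi1,
      Function.iterate_add_apply, hf_primitive, iterate_deriv_iterate_intervalPrimitive hg,
      Nat.add_sub_cancel]
  rw [hderiv, iteratedDeriv_div_const, iteratedDeriv_one_sub_pow_one]
  by_cases hi : i = k + n - 1
  · rw [if_pos (by omega), if_pos hi]
    field_simp
  · rw [if_neg (by omega), if_neg hi, zero_div]

theorem stmt11 (n k : ℕ) (hk : 1 ≤ k) (hkn : k ≤ n) (f : ℝ → ℝ)
    (hf : ∀ t : ℝ, f t = ∫ u in (0:ℝ)..t,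
      ((t-u)^(n-1) / (Nat.factorial (n-1))) * ((1-u)^(k-1) / (Nat.factorial (k-1))))
    (i : ℕ) (hi1 : n ≤ i) (hi2 : i ≤ 2*n - 1) :
    iteratedDeriv i f 1 = if i = k + n - 1 then (-1 : ℝ)^(k-1) else 0 :=
  stmt11_general n k hk hkn f hf i hi1
end

section
/- The function c(s,t) = (1/6)·min(s,t)^2·(3·max(s,t) − min(s,t)) − (1/4)·s^2 t^2 on [0,1]^2 satisfies: for every continuous u on [0,1], the function v(t) = ∫_0^1 c(s,t) u(s) ds is four times continuously differentiable with v'''' = u, v(0) = v'(0) = 0, v'(1) = v'''(1) = 0. -/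
/-!
The kernel splits as `c(s,t) = (t - s)₊³/3! + q(s,t)` with `q` a polynomial in `t`, so on `[0,1]`
the function `v` is the Cauchy repeated integral `J₃ t = ∫₀ᵗ (t - s)³/3! u(s) ds` plus a cubic
whose coefficients are the moments `∫₀¹ u` and `∫₀¹ (1 - s)²/2! u`. Since `J₀' = u` and
`J_{n+1}' = J_n`, four differentiations leave `u`, and the boundary conditions become identities
between those two moments.
-/

open Set MeasureTheory Polynomial

open scoped Nat

section DerivativeChain

variable {𝕜 F : Type*} [NontriviallyNormedField 𝕜] [NormedAddCommGroup F] [NormedSpace 𝕜 F]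
  {f f' : 𝕜 → F} {s : Set 𝕜}

theorem iteratedDerivWithin_succ_eqOn_of_hasDerivWithinAt (hs : UniqueDiffOn 𝕜 s)
    (hf : ∀ x ∈ s, HasDerivWithinAt f (f' x) s x) (n : ℕ) :
    EqOn (iteratedDerivWithin (n + 1) f s) (iteratedDerivWithin n f' s) s := by
  rw [iteratedDerivWithin_succ']
  exact iteratedDerivWithin_congr fun x hx => (hf x hx).derivWithin (hs x hx)

theorem contDiffOn_succ_of_hasDerivWithinAt (hs : UniqueDiffOn 𝕜 s)
    (hf : ∀ x ∈ s, HasDerivWithinAt f (f' x) s x) {n : ℕ} (hf' : ContDiffOn 𝕜 n f' s) :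
    ContDiffOn 𝕜 (n + 1 : ℕ) f s := by
  rw [Nat.cast_succ, contDiffOn_succ_iff_derivWithin hs]
  refine ⟨fun x hx => (hf x hx).differentiableWithinAt, by simp, ?_⟩
  exact hf'.congr fun x hx => (hf x hx).derivWithin (hs x hx)

end DerivativeChain

theorem ContinuousOn.intervalIntegrable_of_mem_Icc {E : Type*} [NormedAddCommGroup E]
    {u : ℝ → E} {a b x y : ℝ} (hu : ContinuousOn u (Icc a b)) (hx : x ∈ Icc a b)
    (hy : y ∈ Icc a b) : IntervalIntegrable u volume x y :=
  (hu.mono (uIcc_subset_Icc hx hy)).intervalIntegrable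

/-- By Cauchy's formula for repeated integration, this is the `(n + 1)`-fold iterated primitive
of `u` vanishing at `a`. -/
noncomputable def cauchyRepeatedIntegral (u : ℝ → ℝ) (a : ℝ) (n : ℕ) (t : ℝ) : ℝ :=
  ∫ s in a..t, (t - s) ^ n / n ! * u s

namespace cauchyRepeatedIntegral

variable {u : ℝ → ℝ} {a b t : ℝ}

theorem self (u : ℝ → ℝ) (a : ℝ) (n : ℕ) : cauchyRepeatedIntegral u a n a = 0 :=
  intervalIntegral.integral_same

theorem succ (hu : IntervalIntegrable u volume a t) (n : ℕ) :
    cauchyRepeatedIntegral u a (n + 1) t =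
      (t * cauchyRepeatedIntegral u a n t - cauchyRepeatedIntegral (fun s => s * u s) a n t) /
        (n + 1) := by
  have hk : ContinuousOn (fun s => (t - s) ^ n / n !) (uIcc a t) := by fun_prop
  have h₁ := hu.continuousOn_mul hk
  have h₂ : IntervalIntegrable (fun s => (t - s) ^ n / n ! * (s * u s)) volume a t :=
    (hu.continuousOn_mul continuousOn_id).continuousOn_mul hk
  simp only [cauchyRepeatedIntegral]
  rw [← intervalIntegral.integral_const_mul, ← intervalIntegral.integral_sub (h₁.const_mul t) h₂,
    ← intervalIntegral.integral_div]
  refine intervalIntegral.integral_congr fun s _ => ?_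
  push_cast [Nat.factorial_succ, pow_succ]
  field_simp

theorem hasDerivWithinAt_zero (hu : ContinuousOn u (Icc a b)) (ht : t ∈ Icc a b) :
    HasDerivWithinAt (cauchyRepeatedIntegral u a 0) (u t) (Icc a b) t := by
  have : Fact (t ∈ Icc a b) := ⟨ht⟩
  have hint := hu.intervalIntegrable_of_mem_Icc (left_mem_Icc.2 (ht.1.trans ht.2)) ht
  have hfun : cauchyRepeatedIntegral u a 0 = fun x => ∫ s in a..x, u s := by
    ext x
    simp [cauchyRepeatedIntegral]
  rw [hfun]
  exact intervalIntegral.integral_hasDerivWithinAt_right hint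
    (hu.stronglyMeasurableAtFilter_nhdsWithin measurableSet_Icc t) (hu t ht)

/-- The product rule applied to the recursion `succ`. -/
theorem hasDerivWithinAt_succ_of_hasDerivWithinAt (hu : ContinuousOn u (Icc a b))
    (ht : t ∈ Icc a b) {n : ℕ} {d d' : ℝ}
    (hd : HasDerivWithinAt (cauchyRepeatedIntegral u a n) d (Icc a b) t)
    (hd' : HasDerivWithinAt (cauchyRepeatedIntegral (fun s => s * u s) a n) d' (Icc a b) t) :
    HasDerivWithinAt (cauchyRepeatedIntegral u a (n + 1))
      ((cauchyRepeatedIntegral u a n t + t * d - d') / (n + 1)) (Icc a b) t := by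
  have hsucc : ∀ x ∈ Icc a b, cauchyRepeatedIntegral u a (n + 1) x =
      (x * cauchyRepeatedIntegral u a n x - cauchyRepeatedIntegral (fun s => s * u s) a n x) /
        (n + 1) := fun x hx =>
    succ (hu.intervalIntegrable_of_mem_Icc (left_mem_Icc.2 (ht.1.trans ht.2)) hx) n
  have := (((hasDerivWithinAt_id t _).mul hd).sub hd').div_const (n + 1)
  simpa using this.congr hsucc (hsucc t ht)

theorem hasDerivWithinAt_succ (hu : ContinuousOn u (Icc a b)) (ht : t ∈ Icc a b) (n : ℕ) :
    HasDerivWithinAt (cauchyRepeatedIntegral u a (n + 1)) (cauchyRepeatedIntegral u a n t)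
      (Icc a b) t := by
  induction n generalizing u with
  | zero =>
    simpa using hasDerivWithinAt_succ_of_hasDerivWithinAt hu ht (hasDerivWithinAt_zero hu ht)
      (hasDerivWithinAt_zero (continuousOn_id.mul hu) ht)
  | succ n ih =>
    convert hasDerivWithinAt_succ_of_hasDerivWithinAt hu ht (ih hu)
      (ih (continuousOn_id.mul hu)) using 1
    rw [succ (hu.intervalIntegrable_of_mem_Icc (left_mem_Icc.2 (ht.1.trans ht.2)) ht) n]
    push_cast
    field_simp
    ring

theorem contDiffOn_add_eval (hu : ContinuousOn u (Icc a b)) (hab : a < b) (n : ℕ) (p : ℝ[X]) :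
    ContDiffOn ℝ (n + 1 : ℕ) (fun x => cauchyRepeatedIntegral u a n x + p.eval x) (Icc a b) := by
  induction n generalizing p with
  | zero =>
    exact contDiffOn_succ_of_hasDerivWithinAt (uniqueDiffOn_Icc hab)
      (fun t ht => (hasDerivWithinAt_zero hu ht).add (p.hasDerivAt t).hasDerivWithinAt)
      (contDiffOn_zero.2 (hu.add p.derivative.continuous.continuousOn))
  | succ n ih =>
    exact contDiffOn_succ_of_hasDerivWithinAt (uniqueDiffOn_Icc hab)
      (fun t ht => (hasDerivWithinAt_succ hu ht n).add (p.hasDerivAt t).hasDerivWithinAt)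
      (ih p.derivative)

theorem iteratedDerivWithin_add_eval (hu : ContinuousOn u (Icc a b)) (hab : a < b) (n k : ℕ)
    (p : ℝ[X]) :
    EqOn (iteratedDerivWithin k (fun x => cauchyRepeatedIntegral u a (n + k) x + p.eval x)
        (Icc a b))
      (fun x => cauchyRepeatedIntegral u a n x + (derivative^[k] p).eval x) (Icc a b) := by
  induction k generalizing p with
  | zero => simp [EqOn]
  | succ k ih =>
    refine (iteratedDerivWithin_succ_eqOn_of_hasDerivWithinAt (uniqueDiffOn_Icc hab)
      (fun t ht => (hasDerivWithinAt_succ hu ht (n + k)).add (p.hasDerivAt t).hasDerivWithinAt)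
      k).trans ?_
    simpa only [Function.iterate_succ_apply] using ih p.derivative

theorem iteratedDerivWithin_succ_add_eval (hu : ContinuousOn u (Icc a b)) (hab : a < b)
    (n : ℕ) (p : ℝ[X]) :
    EqOn (iteratedDerivWithin (n + 1) (fun x => cauchyRepeatedIntegral u a n x + p.eval x)
        (Icc a b))
      (fun x => u x + (derivative^[n + 1] p).eval x) (Icc a b) := by
  intro t ht
  have hn := iteratedDerivWithin_add_eval hu hab 0 n p
  rw [zero_add] at hn
  rw [iteratedDerivWithin_succ, derivWithin_congr hn (hn ht), Function.iterate_succ_apply']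
  exact ((hasDerivWithinAt_zero hu ht).add ((derivative^[n] p).hasDerivAt t).hasDerivWithinAt
    ).derivWithin (uniqueDiffOn_Icc hab t ht)

theorem integral_max_sub_pow_mul (hu : ContinuousOn u (Icc a b)) (ht : t ∈ Icc a b) {n : ℕ}
    (hn : n ≠ 0) :
    ∫ s in a..b, max (t - s) 0 ^ n / n ! * u s = cauchyRepeatedIntegral u a n t := by
  have ha : a ∈ Icc a b := left_mem_Icc.2 (ht.1.trans ht.2)
  have hb : b ∈ Icc a b := right_mem_Icc.2 (ht.1.trans ht.2)
  have hcont : ContinuousOn (fun s => max (t - s) 0 ^ n / n ! * u s) (Icc a b) :=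
    (by fun_prop : Continuous fun s : ℝ => max (t - s) 0 ^ n / n !).continuousOn.mul hu
  rw [← intervalIntegral.integral_add_adjacent_intervals
    (hcont.intervalIntegrable_of_mem_Icc ha ht) (hcont.intervalIntegrable_of_mem_Icc ht hb)]
  have hleft : EqOn (fun s => max (t - s) 0 ^ n / n ! * u s)
      (fun s => (t - s) ^ n / n ! * u s) (uIcc a t) := by
    intro s hs
    rw [uIcc_of_le ht.1] at hs
    simp [max_eq_left (sub_nonneg.2 hs.2)]
  have hright : EqOn (fun s => max (t - s) 0 ^ n / n ! * u s) 0 (uIcc t b) := by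
    intro s hs
    rw [uIcc_of_le ht.2] at hs
    simp [max_eq_right (sub_nonpos.2 hs.1), hn]
  rw [intervalIntegral.integral_congr hleft, intervalIntegral.integral_congr hright]
  simp [cauchyRepeatedIntegral]

end cauchyRepeatedIntegral

/-- The factors `(1 - s) ^ k / k !` are kept so that integrating against `u` gives
`cauchyRepeatedIntegral u 0 k 1`. -/
theorem integratedBridgeCov_eq (s t : ℝ) :
    1/6 * (min s t)^2 * (3 * max s t - min s t) - 1/4 * s^2 * t^2 =
      max (t - s) 0 ^ 3 / 3 ! + (t ^ 2 / 4 - t ^ 3 / 6) * ((1 - s) ^ 0 / 0 !) -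
        t ^ 2 / 2 * ((1 - s) ^ 2 / 2 !) := by
  rcases le_total s t with hst | hts
  · rw [min_eq_left hst, max_eq_right hst, max_eq_left (sub_nonneg.2 hst)]
    push_cast [Nat.factorial]
    ring
  · rw [min_eq_right hts, max_eq_left hts, max_eq_right (sub_nonpos.2 hts)]
    push_cast [Nat.factorial]
    ring

open cauchyRepeatedIntegral in
theorem integral_integratedBridgeCov_mul {u : ℝ → ℝ} (hu : ContinuousOn u (Icc 0 1)) {t : ℝ}
    (ht : t ∈ Icc (0 : ℝ) 1) :
    ∫ s in (0 : ℝ)..1, (1/6 * (min s t)^2 * (3 * max s t - min s t) - 1/4 * s^2 * t^2) * u s =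
      cauchyRepeatedIntegral u 0 3 t + (t ^ 2 / 4 - t ^ 3 / 6) * cauchyRepeatedIntegral u 0 0 1 -
        t ^ 2 / 2 * cauchyRepeatedIntegral u 0 2 1 := by
  have hint : ∀ f : ℝ → ℝ, Continuous f → IntervalIntegrable (fun s => f s * u s) volume 0 1 :=
    fun f hf => (hf.continuousOn.mul hu).intervalIntegrable_of_Icc zero_le_one
  have hmax := hint (fun s => max (t - s) 0 ^ 3 / 3 !) (by fun_prop)
  have h₀ := hint (fun s => (1 - s) ^ 0 / 0 !) (by fun_prop)
  have h₂ := hint (fun s => (1 - s) ^ 2 / 2 !) (by fun_prop)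
  have hsplit : (fun s => (1/6 * (min s t)^2 * (3 * max s t - min s t) - 1/4 * s^2 * t^2) * u s) =
      fun s => max (t - s) 0 ^ 3 / 3 ! * u s + (t ^ 2 / 4 - t ^ 3 / 6) * ((1 - s) ^ 0 / 0 ! * u s) -
        t ^ 2 / 2 * ((1 - s) ^ 2 / 2 ! * u s) := by
    ext s
    rw [integratedBridgeCov_eq]
    ring
  rw [hsplit, intervalIntegral.integral_sub (hmax.add (h₀.const_mul _)) (h₂.const_mul _),
    intervalIntegral.integral_add hmax (h₀.const_mul _), intervalIntegral.integral_const_mul,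
    intervalIntegral.integral_const_mul, integral_max_sub_pow_mul hu ht three_ne_zero]
  rfl

open cauchyRepeatedIntegral in
theorem stmt12 (u : ℝ → ℝ) (hu : ContinuousOn u (Set.Icc 0 1))
    (c : ℝ → ℝ → ℝ)
    (hc : ∀ s t : ℝ, c s t = 1/6 * (min s t)^2 * (3 * max s t - min s t) - 1/4 * s^2 * t^2)
    (v : ℝ → ℝ) (hv : ∀ t : ℝ, v t = ∫ s in (0:ℝ)..1, c s t * u s) :
    ContDiffOn ℝ 4 v (Set.Icc 0 1) ∧
    (∀ t ∈ Set.Icc (0:ℝ) 1, iteratedDerivWithin 4 v (Set.Icc 0 1) t = u t) ∧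
    v 0 = 0 ∧ iteratedDerivWithin 1 v (Set.Icc 0 1) 0 = 0 ∧
    iteratedDerivWithin 1 v (Set.Icc 0 1) 1 = 0 ∧
    iteratedDerivWithin 3 v (Set.Icc 0 1) 1 = 0 := by
  have hab : (0 : ℝ) < 1 := one_pos
  have h₀ : (0 : ℝ) ∈ Icc 0 1 := left_mem_Icc.2 hab.le
  have h₁ : (1 : ℝ) ∈ Icc 0 1 := right_mem_Icc.2 hab.le
  set α := cauchyRepeatedIntegral u 0 0 1
  set β := cauchyRepeatedIntegral u 0 2 1
  set p : ℝ[X] := C (α / 4 - β / 2) * X ^ 2 - C (α / 6) * X ^ 3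
  have hveq : EqOn v (fun t => cauchyRepeatedIntegral u 0 3 t + p.eval t) (Icc 0 1) := by
    intro t ht
    simp only [hv, hc, integral_integratedBridgeCov_mul hu ht, p, eval_sub, eval_mul, eval_C,
      eval_pow, eval_X]
    ring
  have hD (k : ℕ) := iteratedDerivWithin_congr (n := k) hveq
  have hD₁ := iteratedDerivWithin_add_eval hu hab 2 1 p
  have hD₃ := iteratedDerivWithin_add_eval hu hab 0 3 p
  have hD₄ := iteratedDerivWithin_succ_add_eval hu hab 3 p
  refine ⟨(contDiffOn_add_eval hu hab 3 p).congr hveq, fun t ht => ?_, ?_, ?_, ?_, ?_⟩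
  · rw [(hD 4 ht).trans (hD₄ ht), iterate_derivative_eq_zero (by unfold p; compute_degree!)]
    simp
  · rw [hveq h₀]
    simp [p, self]
  · rw [(hD 1 h₀).trans (hD₁ h₀)]
    simp [p, self]
  · rw [(hD 1 h₁).trans (hD₁ h₁)]
    simp only [p, Function.iterate_one, derivative_sub, derivative_C_mul_X_pow, eval_sub, eval_mul,
      eval_C, eval_pow, eval_X, one_pow]
    ring
  · rw [(hD 3 h₁).trans (hD₃ h₁)]
    norm_num [p, α, Function.iterate_succ]
end

section
/- Let n be a positive integer and let M be the n×n matrix with entries M_{i,j} = 1/((n+j-i)!), where i ranges over a set I = {i_1 < ... < i_n} ⊆ {0,...,2n-1} and j ranges over {0,...,n-1} (with the convention 1/m! = 0 for m < 0). Then M is invertible. -/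
theorem stmt19 (n : ℕ) (hn : 0 < n) (I : Finset ℕ) (hI : I ⊆ Finset.range (2*n))
    (hcard : I.card = n) :
    IsUnit (Matrix.det (Matrix.of fun a j : Fin n =>
      if (I.orderEmbOfFin hcard a : ℕ) ≤ n + (j : ℕ) then
        (1 : ℝ) / (Nat.factorial (n + (j : ℕ) - (I.orderEmbOfFin hcard a : ℕ)))
      else 0)) := by
  set M : Matrix (Fin n) (Fin n) ℝ := Matrix.of fun a j : Fin n =>
      if (I.orderEmbOfFin hcard a : ℕ) ≤ n + (j : ℕ) then
        (1 : ℝ) / (Nat.factorial (n + (j : ℕ) - (I.orderEmbOfFin hcard a : ℕ)))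
      else 0 with hM
  -- basic facts about the row indices
  have hmem : ∀ a : Fin n, (I.orderEmbOfFin hcard a : ℕ) < 2 * n := by
    intro a
    have := I.orderEmbOfFin_mem hcard a
    simpa using hI this
  set i : Fin n → ℕ := fun a => (I.orderEmbOfFin hcard a : ℕ) with hi
  set y : Fin n → ℕ := fun a => 2 * n - 1 - i a with hy
  have hyinj : Function.Injective fun a => ((y a : ℝ)) := by
    intro a b hab
    have h1 : y a = y b := Nat.cast_injective hab
    have hia : i a < 2 * n := hmem a
    have hib : i b < 2 * n := hmem b
    have : i a = i b := by simp only [hy] at h1; omega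
    exact (I.orderEmbOfFin hcard).injective this
  set M' : Matrix (Fin n) (Fin n) ℝ := M.submatrix id (Fin.rev) with hM'
  -- entrywise identity
  have key : ∀ a j : Fin n, (Nat.factorial (y a) : ℝ) * M' a j
      = ((Nat.descFactorial (y a) (j : ℕ) : ℕ) : ℝ) := by
    intro a j
    have hj : (j : ℕ) < n := j.isLt
    have hrev : ((Fin.rev j : Fin n) : ℕ) = n - 1 - (j : ℕ) := by
      rw [Fin.val_rev]; omega
    have hia : i a < 2 * n := hmem a
    simp only [hM', Matrix.submatrix_apply, id, hM, Matrix.of_apply]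
    by_cases h : i a ≤ n + ((Fin.rev j : Fin n) : ℕ)
    · rw [if_pos h]
      have hjy : (j : ℕ) ≤ y a := by simp only [hy]; omega
      have harg : n + ((Fin.rev j : Fin n) : ℕ) - i a = y a - (j : ℕ) := by
        simp only [hy]; omega
      rw [harg, Nat.descFactorial_eq_div hjy, Nat.cast_div_charZero
        (Nat.factorial_dvd_factorial (by omega))]
      field_simp
    · rw [if_neg h]
      have hjy : y a < (j : ℕ) := by simp only [hy]; omega
      rw [Nat.descFactorial_eq_zero_iff_lt.mpr hjy]
      simp
  -- the integer matrix
  set D : Matrix (Fin n) (Fin n) ℝ :=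
    Matrix.of fun a j : Fin n => ((descPochhammer ℝ (j : ℕ)).eval ((y a : ℝ))) with hD
  have hDM : D = Matrix.diagonal (fun a => (Nat.factorial (y a) : ℝ)) * M' := by
    ext a j
    rw [Matrix.diagonal_mul]
    rw [key a j]
    simp only [hD, Matrix.of_apply, descPochhammer_eval_eq_descFactorial]
  have hDdet : D.det = (Matrix.vandermonde fun a => ((y a : ℝ))).det := by
    refine (Matrix.det_eval_matrixOfPolynomials_eq_det_vandermonde _ _ ?_ ?_).symm
    · intro k; exact descPochhammer_natDegree ℝ (k : ℕ)
    · intro k; exact monic_descPochhammer ℝ (k : ℕ)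
  have hvdm : (Matrix.vandermonde fun a => ((y a : ℝ))).det ≠ 0 :=
    Matrix.det_vandermonde_ne_zero_iff.mpr hyinj
  have hM'det : M'.det ≠ 0 := by
    intro h0
    apply hvdm
    rw [← hDdet, hDM, Matrix.det_mul, h0, mul_zero]
  have hMdet : M.det ≠ 0 := by
    intro h0
    apply hM'det
    have := Matrix.det_permute' (Fin.revPerm : Equiv.Perm (Fin n)) M
    rw [hM']
    have hsub : M.submatrix id Fin.rev = M.submatrix id (Fin.revPerm : Equiv.Perm (Fin n)) := rfl
    rw [hsub, this, h0, mul_zero]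
  exact isUnit_iff_ne_zero.mpr hMdet
end
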